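/- Let G be a graph on [n] and let i_0 < i_1 < ⋯ < i_l be an induced path in G (l ≥ 1). Then the l edges {x_{i_0}, y_{i_1}}, {x_{i_1}, y_{i_2}}, …, {x_{i_{l-1}}, y_{i_l}} form an induced matching of the bipartite graph H = in_lex(G). -/

import Mathlib

open SimpleGraph

/-- `G` has the interval property with respect to its labeling: for every edge `{i,j}`
with `i < j`, every pair `{k,l}` with `i ≤ k < l ≤ j` is an edge of `G`. -/
def HasIntervalProperty {n : ℕ} (G : SimpleGraph (Fin n)) : Prop :=
  ∀ i j k l : Fin n, G.Adj i j → i < j → i ≤ k → k < l → l ≤ j → G.Adj k l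

/-- The bipartite graph `in_lex(G)` on `{x_1,…,x_n} ∪ {y_1,…,y_n}` (here `Sum.inl i = x_i`,
`Sum.inr j = y_j`) whose edges are the pairs `{x_i, y_j}` with `i < j` and `{i,j} ∈ E(G)`. -/
def inLex {n : ℕ} (G : SimpleGraph (Fin n)) : SimpleGraph (Fin n ⊕ Fin n) :=
  SimpleGraph.fromRel (fun u v =>
    ∃ i j : Fin n, i < j ∧ G.Adj i j ∧ u = Sum.inl i ∧ v = Sum.inr j)

/-- `M` is an induced matching of `H`: a set of edges of `H`, pairwise vertex-disjoint,
such that no edge of `H` joins two vertices lying in distinct edges of `M`. -/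
def IsInducedMatching {V : Type*} (H : SimpleGraph V) (M : Set (Sym2 V)) : Prop :=
  M ⊆ H.edgeSet ∧
  (∀ e ∈ M, ∀ f ∈ M, e ≠ f → ∀ v, v ∈ e → v ∉ f) ∧
  (∀ e ∈ M, ∀ f ∈ M, e ≠ f → ∀ u ∈ e, ∀ v ∈ f, ¬ H.Adj u v)

/-- An indexed family of `m` pairwise distinct edges forming an induced matching of `H`. -/
def IsInducedMatchingFamily {V : Type*} (H : SimpleGraph V) {m : ℕ} (f : Fin m → Sym2 V) : Prop :=
  Function.Injective f ∧ IsInducedMatching H (Set.range f)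

/-- `p` is an induced path of length `l` in `G`: `l+1` distinct vertices such that the edges
of `G` among them are exactly the consecutive pairs. -/
def IsInducedPath {V : Type*} (G : SimpleGraph V) (l : ℕ) (p : Fin (l + 1) → V) : Prop :=
  Function.Injective p ∧
  ∀ a b : Fin (l + 1), G.Adj (p a) (p b) ↔ ((a : ℕ) + 1 = b ∨ (b : ℕ) + 1 = a)

/-- `c` is an induced cycle of length `k` in `H`: `k` distinct vertices such that the edges
of `H` among them are exactly the consecutive pairs (cyclically). -/
def IsInducedCycle {V : Type*} (H : SimpleGraph V) (k : ℕ) (c : Fin k → V) : Prop :=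
  3 ≤ k ∧ Function.Injective c ∧
  ∀ a b : Fin k, H.Adj (c a) (c b) ↔ (((a : ℕ) + 1) % k = b ∨ ((b : ℕ) + 1) % k = a)

/-- Condition (∗) for an induced matching `{x_{i t}, y_{j t}}` of `in_lex(G)`: for every
index `a` and vertex `t < i a` with `{t, j a} ∈ E(G)`, replacing `x_{i a}` by `x_t`
does not yield an induced matching of `in_lex(G)`. -/
def CondStar {n m : ℕ} (G : SimpleGraph (Fin n)) (i j : Fin m → Fin n) : Prop :=
  ∀ a : Fin m, ∀ t : Fin n, t < i a → G.Adj t (j a) →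
    ¬ IsInducedMatchingFamily (inLex G)
        (fun u => if u = a then s(Sum.inl t, Sum.inr (j u))
                  else s(Sum.inl (i u), Sum.inr (j u)))


namespace SimpleGraph

variable {α β : Type*} {H : SimpleGraph (α ⊕ β)}

theorem isInducedMatchingFamily_of_sum {m : ℕ} {a : Fin m → α} {b : Fin m → β}
    (hinl : ∀ u v, ¬H.Adj (.inl u) (.inl v)) (hinr : ∀ u v, ¬H.Adj (.inr u) (.inr v))
    (ha : Function.Injective a) (hb : Function.Injective b)
    (hedge : ∀ t, H.Adj (.inl (a t)) (.inr (b t)))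
    (hcross : ∀ s t, s ≠ t → ¬H.Adj (.inl (a s)) (.inr (b t))) :
    IsInducedMatchingFamily H (fun t => s(.inl (a t), .inr (b t))) := by
  refine ⟨fun s t hst => ha (by simpa using hst : a s = a t ∧ b s = b t).1, ?_, ?_, ?_⟩
  · rintro _ ⟨t, rfl⟩
    exact hedge t
  · rintro _ ⟨s, rfl⟩ _ ⟨t, rfl⟩ hne v hvs hvt
    have hst : s ≠ t := by rintro rfl; exact hne rfl
    simp only [Sym2.mem_iff] at hvs hvt
    rcases hvs with rfl | rfl <;> rcases hvt with h | h <;> simp_all [ha.eq_iff, hb.eq_iff]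
  · rintro _ ⟨s, rfl⟩ _ ⟨t, rfl⟩ hne u hu v hv huv
    have hst : s ≠ t := by rintro rfl; exact hne rfl
    simp only [Sym2.mem_iff] at hu hv
    rcases hu with rfl | rfl <;> rcases hv with rfl | rfl
    exacts [hinl _ _ huv, hcross s t hst huv, hcross t s hst.symm huv.symm, hinr _ _ huv]

end SimpleGraph

section inLex

variable {n : ℕ} (G : SimpleGraph (Fin n))

theorem inLex_adj_inl_inr {i j : Fin n} : (inLex G).Adj (.inl i) (.inr j) ↔ i < j ∧ G.Adj i j := by
  simp [inLex]

theorem not_inLex_adj_inl_inl (i j : Fin n) : ¬(inLex G).Adj (.inl i) (.inl j) := by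
  simp [inLex]

theorem not_inLex_adj_inr_inr (i j : Fin n) : ¬(inLex G).Adj (.inr i) (.inr j) := by
  simp [inLex]

end inLex

theorem stmt_5_general {n : ℕ} (G : SimpleGraph (Fin n)) (l : ℕ)
    (p : Fin (l + 1) → Fin n) (hp : IsInducedPath G l p) (hmono : StrictMono p) :
    IsInducedMatchingFamily (inLex G)
      (fun t : Fin l => s(Sum.inl (p t.castSucc), Sum.inr (p t.succ))) := by
  refine isInducedMatchingFamily_of_sum (not_inLex_adj_inl_inl G) (not_inLex_adj_inr_inr G)
    (hmono.injective.comp (Fin.castSucc_injective l)) (hmono.injective.comp (Fin.succ_injective l))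
    (fun t => (inLex_adj_inl_inr G).2 ⟨hmono t.castSucc_lt_succ, (hp.2 _ _).2 (.inl (by simp))⟩)
    fun s t hst hadj => ?_
  -- `x_{p s} y_{p (t+1)}` forces `s < t + 1`, and then only `s = t` makes `{p s, p (t+1)}` a path edge.
  obtain ⟨hlt, hG⟩ := (inLex_adj_inl_inr G).1 hadj
  have hs_lt : (s : ℕ) < t + 1 := by simpa [Fin.lt_def] using hmono.lt_iff_lt.1 hlt
  have hst_val : (s : ℕ) ≠ t := fun h => hst (Fin.ext h)
  rcases (hp.2 _ _).1 hG with h | h <;> simp only [Fin.val_castSucc, Fin.val_succ] at h <;> omega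

/-- If `i_0 < i_1 < ⋯ < i_l` is an induced path in `G` (`l ≥ 1`), then the `l` edges
`{x_{i_0}, y_{i_1}}, …, {x_{i_{l-1}}, y_{i_l}}` form an induced matching of `in_lex(G)`. -/
theorem stmt_5 {n : ℕ} (G : SimpleGraph (Fin n)) (l : ℕ) (hl : 1 ≤ l)
    (p : Fin (l + 1) → Fin n) (hp : IsInducedPath G l p) (hmono : StrictMono p) :
    IsInducedMatchingFamily (inLex G)
      (fun t : Fin l => s(Sum.inl (p t.castSucc), Sum.inr (p t.succ))) :=
  stmt_5_general G l p hp hmono
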